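/- Let 0 ≤ α < 1. Then there exists a constant S_α > 0 such that for every b > 0 and every H¹ function v on [b,b+1] satisfying ∫_b^{b+1} v(r)·r dr = 0, one has max_{b ≤ r ≤ b+1} v(r)²·r^{1−α} ≤ S_α · ∫_b^{b+1} v'(r)² · r dr. -/

import Mathlib

/-!
Write `I = ∫_b^{b+1} g(t)² t dt` and `β = 1 - α`. Cauchy–Schwarz with the weights `1/t` and `t`
gives `(v y - v x)² ≤ |log y - log x| · I`, and since `(x + 1)^β ≤ x^β + 1` one has
`|log r - log s| · r^β · s ≤ (b + 1)/β` on `[b, b+1]`. As `v` has mean zero for the weight `s ds`,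
`v(r)² ∫ s ds ≤ ∫ (v(r) - v(s))² s ds`; averaging the two bounds gives
`v(r)² r^β (b + 1/2) ≤ (b + 1) I/β`, i.e. the inequality with `S_α = 2/(1 - α)`.
-/

open MeasureTheory Set Filter Topology Real

theorem integrable_abs_of_integrable_sq {α : Type*} [MeasurableSpace α] {μ : Measure α}
    [IsFiniteMeasure μ] {g : α → ℝ} (h : Integrable (fun t => g t ^ 2) μ) :
    Integrable (fun t => |g t|) μ := by
  have hm : AEStronglyMeasurable (fun t => |g t|) μ := by
    simpa only [Real.sqrt_sq_eq_abs] using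
      Real.continuous_sqrt.comp_aestronglyMeasurable h.aestronglyMeasurable
  exact ((memLp_two_iff_integrable_sq hm).2 (by simpa only [sq_abs] using h)).integrable
    one_le_two

theorem IntervalIntegrable.abs_of_sq {g : ℝ → ℝ} {a b : ℝ}
    (h : IntervalIntegrable (fun t => g t ^ 2) volume a b) :
    IntervalIntegrable (fun t => |g t|) volume a b :=
  ⟨integrable_abs_of_integrable_sq h.1, integrable_abs_of_integrable_sq h.2⟩

theorem aestronglyMeasurable_Ioc_of_forall_lt {E : Type*} [TopologicalSpace E]
    [TopologicalSpace.PseudoMetrizableSpace E] {μ : Measure ℝ} [NullSingletonClass μ]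
    {f : ℝ → E} {a c : ℝ}
    (h : ∀ x < c, AEStronglyMeasurable f (μ.restrict (Ioc a x))) :
    AEStronglyMeasurable f (μ.restrict (Ioc a c)) := by
  have hu : Tendsto (fun n : ℕ => c - 1 / (n + 1)) atTop (𝓝 c) := by
    simpa using tendsto_one_div_add_atTop_nhds_zero_nat.const_sub c
  refine (aecover_Ioc_of_Ioc tendsto_const_nhds hu).aestronglyMeasurable fun n => ?_
  rw [Measure.restrict_restrict measurableSet_Ioc]
  exact ((h _ (sub_lt_self c Nat.one_div_pos_of_nat)).mono_set inter_subset_left)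

theorem exists_aestronglyMeasurable_Ioc_iff_le {E : Type*} [TopologicalSpace E]
    [TopologicalSpace.PseudoMetrizableSpace E] (μ : Measure ℝ) [NullSingletonClass μ]
    (f : ℝ → E) {a b : ℝ} (hab : a ≤ b) :
    ∃ c ∈ Icc a b, ∀ x ∈ Icc a b,
      AEStronglyMeasurable f (μ.restrict (Ioc a x)) ↔ x ≤ c := by
  set S := {x ∈ Icc a b | AEStronglyMeasurable f (μ.restrict (Ioc a x))}
  have haS : a ∈ S := ⟨left_mem_Icc.2 hab, by simp⟩
  have hS : BddAbove S := ⟨b, fun x hx => hx.1.2⟩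
  have hc : AEStronglyMeasurable f (μ.restrict (Ioc a (sSup S))) := by
    refine aestronglyMeasurable_Ioc_of_forall_lt fun x hx => ?_
    obtain ⟨y, hyS, hxy⟩ := exists_lt_of_lt_csSup ⟨a, haS⟩ hx
    exact hyS.2.mono_set (Ioc_subset_Ioc_right hxy.le)
  refine ⟨sSup S, ⟨le_csSup hS haS, csSup_le ⟨a, haS⟩ fun x hx => hx.1.2⟩,
    fun x hx => ⟨fun hfx => le_csSup hS ⟨hx, hfx⟩, fun hxc => ?_⟩⟩
  exact hc.mono_set (Ioc_subset_Ioc_right hxc)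

theorem abs_sub_le_integral_abs_of_eq_add_integral {v g : ℝ → ℝ} {a b x y : ℝ}
    (hv_cont : ContinuousOn v (Icc a b))
    (hg : IntervalIntegrable (fun t => |g t|) volume a b)
    (hv : ∀ z ∈ Icc a b, v z = v a + ∫ t in a..z, g t)
    (hax : a ≤ x) (hxy : x ≤ y) (hyb : y ≤ b) :
    |v y - v x| ≤ ∫ t in x..y, |g t| := by
  have hab : a ≤ b := hax.trans (hxy.trans hyb)
  obtain ⟨c, hc, hmeas⟩ := exists_aestronglyMeasurable_Ioc_iff_le volume g hab
  have hint : ∀ z ∈ Icc a b, IntervalIntegrable g volume a z ↔ z ≤ c := fun z hz => by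
    rw [intervalIntegrable_iff_integrableOn_Ioc_of_le hz.1, ← hmeas z hz]
    refine ⟨fun h => h.aestronglyMeasurable, fun h => ?_⟩
    refine (integrable_norm_iff h).1 ?_
    simp only [Real.norm_eq_abs]
    exact hg.1.mono_set (Ioc_subset_Ioc_right hz.2)
  have habs_mono : ∀ z, x ≤ z → z ≤ y → ∫ t in x..z, |g t| ≤ ∫ t in x..y, |g t| :=
    fun z hxz hzy => intervalIntegral.integral_mono_interval le_rfl hxz hzy
      (ae_of_all _ fun t => abs_nonneg _) (hg.mono_set (by
        rw [uIcc_of_le hab, uIcc_of_le (hxz.trans hzy)]; exact Icc_subset_Icc hax hyb))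
  -- where `g` fails to be integrable, the junk value `0` of the integral makes `v` constant
  have hconst : ∀ z ∈ Icc c b, v z = v c := by
    rcases hc.2.eq_or_lt with hcb | hcb
    · intro z hz
      rw [le_antisymm hz.2 (hcb ▸ hz.1), hcb]
    have hva : EqOn v (fun _ => v a) (Ioc c b) := fun z hz => by
      have hz' : z ∈ Icc a b := ⟨hc.1.trans hz.1.le, hz.2⟩
      rw [hv z hz', intervalIntegral.integral_undef fun h => ((hint z hz').1 h).not_gt hz.1,
        add_zero]
    have := hva.of_subset_closure (hv_cont.mono (Icc_subset_Icc hc.1 le_rfl)) continuousOn_const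
      Ioc_subset_Icc_self (closure_Ioc hcb.ne).ge
    intro z hz
    rw [this hz, this (left_mem_Icc.2 hcb.le)]
  have hbelow : ∀ z, x ≤ z → z ≤ c → z ≤ b → |v z - v x| ≤ ∫ t in x..z, |g t| := by
    intro z hxz hzc hzb
    have hxc := hxz.trans hzc
    rw [hv z ⟨hax.trans hxz, hzb⟩, hv x ⟨hax, hxz.trans hzb⟩, add_sub_add_left_eq_sub,
      intervalIntegral.integral_interval_sub_left
        ((hint z ⟨hax.trans hxz, hzb⟩).2 hzc) ((hint x ⟨hax, hxz.trans hzb⟩).2 hxc)]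
    exact intervalIntegral.abs_integral_le_integral_abs hxz
  rcases le_total y c with hyc | hcy
  · exact hbelow y hxy hyc hyb
  rcases le_total x c with hxc | hcx
  · rw [hconst y ⟨hcy, hyb⟩]
    exact (hbelow c hxc le_rfl hc.2).trans (habs_mono c hxc hcy)
  · rw [hconst y ⟨hcx.trans hxy, hyb⟩, hconst x ⟨hcx, hxy.trans hyb⟩, sub_self, abs_zero]
    exact intervalIntegral.integral_nonneg hxy fun t _ => abs_nonneg _

theorem sq_integral_abs_le_log_sub_log_mul_integral {g : ℝ → ℝ} {x y : ℝ} (hx : 0 < x)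
    (hxy : x ≤ y) (hg : IntervalIntegrable (fun t => g t ^ 2) volume x y) :
    (∫ t in x..y, |g t|) ^ 2 ≤ (log y - log x) * ∫ t in x..y, g t ^ 2 * t := by
  set A := ∫ t in x..y, |g t|
  set B := ∫ t in x..y, g t ^ 2 * t
  have hpos : ∀ t ∈ uIcc x y, 0 < t := fun t ht => hx.trans_le (uIcc_of_le hxy ▸ ht).1
  have hinv : IntervalIntegrable (fun t => t⁻¹) volume x y :=
    intervalIntegral.intervalIntegrable_inv (fun t ht => (hpos t ht).ne') continuousOn_id
  have habs : IntervalIntegrable (fun t => |g t|) volume x y := hg.abs_of_sq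
  have hw : IntervalIntegrable (fun t => g t ^ 2 * t) volume x y :=
    hg.mul_continuousOn continuousOn_id
  -- Cauchy–Schwarz through the discriminant of `l ↦ ∫ (l - |g t| t)² / t ≥ 0`
  have hquad : ∀ l : ℝ, 0 ≤ (log y - log x) * (l * l) + (-2 * A) * l + B := by
    intro l
    have hint : ∫ t in x..y, (l * l * t⁻¹ + -2 * l * |g t| + g t ^ 2 * t) =
        (log y - log x) * (l * l) + (-2 * A) * l + B := by
      rw [intervalIntegral.integral_add ((hinv.const_mul _).add (habs.const_mul _)) hw,
        intervalIntegral.integral_add (hinv.const_mul _) (habs.const_mul _),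
        intervalIntegral.integral_const_mul, intervalIntegral.integral_const_mul,
        integral_inv_of_pos hx (hx.trans_le hxy), log_div (hx.trans_le hxy).ne' hx.ne']
      ring
    rw [← hint]
    refine intervalIntegral.integral_nonneg hxy fun t ht => ?_
    have ht : 0 < t := hx.trans_le ht.1
    have : l * l * t⁻¹ + -2 * l * |g t| + g t ^ 2 * t = (l - |g t| * t) ^ 2 / t := by
      field_simp
      rw [← sq_abs (g t)]
      ring
    rw [this]
    positivity
  have := discrim_le_zero hquad
  rw [discrim] at this
  linarith

theorem sq_sub_le_abs_log_sub_log_mul_integral {v g : ℝ → ℝ} {a b x y : ℝ} (ha : 0 < a)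
    (hv_cont : ContinuousOn v (Icc a b))
    (hg : IntervalIntegrable (fun t => g t ^ 2) volume a b)
    (hv : ∀ z ∈ Icc a b, v z = v a + ∫ t in a..z, g t)
    (hx : x ∈ Icc a b) (hy : y ∈ Icc a b) :
    (v y - v x) ^ 2 ≤ |log y - log x| * ∫ t in a..b, g t ^ 2 * t := by
  wlog hxy : x ≤ y generalizing x y
  · rw [← neg_sub, neg_sq, abs_sub_comm]
    exact this hy hx (le_of_not_ge hxy)
  have hab : a ≤ b := hx.1.trans hx.2
  have hsub : uIcc x y ⊆ uIcc a b := by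
    rw [uIcc_of_le hxy, uIcc_of_le hab]
    exact Icc_subset_Icc hx.1 hy.2
  calc (v y - v x) ^ 2 = |v y - v x| ^ 2 := (sq_abs _).symm
    _ ≤ (∫ t in x..y, |g t|) ^ 2 := by
      gcongr
      exact abs_sub_le_integral_abs_of_eq_add_integral hv_cont hg.abs_of_sq hv hx.1 hxy hy.2
    _ ≤ (log y - log x) * ∫ t in x..y, g t ^ 2 * t :=
      sq_integral_abs_le_log_sub_log_mul_integral (ha.trans_le hx.1) hxy (hg.mono_set hsub)
    _ ≤ |log y - log x| * ∫ t in a..b, g t ^ 2 * t := by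
      refine mul_le_mul (le_abs_self _) ?_ ?_ (abs_nonneg _)
      · refine intervalIntegral.integral_mono_interval hx.1 hxy hy.2 ?_
          (hg.mul_continuousOn continuousOn_id)
        filter_upwards [ae_restrict_mem measurableSet_Ioc] with t ht
        have := ha.trans ht.1
        positivity
      · refine intervalIntegral.integral_nonneg hxy fun t ht => ?_
        have := ha.trans_le (hx.1.trans ht.1)
        positivity

theorem log_sub_log_mul_rpow_le {x y β : ℝ} (hx : 0 < x) (hxy : x ≤ y) (hyx : y ≤ x + 1)
    (hβ0 : 0 < β) (hβ1 : β ≤ 1) :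
    (log y - log x) * x ^ β ≤ 1 / β := by
  have hy : 0 < y := hx.trans_le hxy
  have hxβ : 0 < x ^ β := rpow_pos_of_pos hx β
  have hlog : β * (log y - log x) ≤ y ^ β / x ^ β - 1 := by
    have := log_le_sub_one_of_pos (div_pos (rpow_pos_of_pos hy β) hxβ)
    rwa [log_div (rpow_pos_of_pos hy β).ne' hxβ.ne', log_rpow hy, log_rpow hx, ← mul_sub] at this
  have hsubadd : y ^ β ≤ x ^ β + 1 := calc
    y ^ β = (x + (y - x)) ^ β := by rw [add_sub_cancel]
    _ ≤ x ^ β + (y - x) ^ β := rpow_add_le_add_rpow hx.le (sub_nonneg.2 hxy) hβ0.le hβ1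
    _ ≤ x ^ β + 1 := by gcongr; exact rpow_le_one (sub_nonneg.2 hxy) (by linarith) hβ0.le
  rw [le_div_iff₀ hβ0]
  calc (log y - log x) * x ^ β * β = β * (log y - log x) * x ^ β := by ring
    _ ≤ (y ^ β / x ^ β - 1) * x ^ β := mul_le_mul_of_nonneg_right hlog hxβ.le
    _ = y ^ β - x ^ β := by field_simp
    _ ≤ 1 := by linarith

theorem abs_log_sub_log_mul_mul_rpow_le {b r s β : ℝ} (hb : 0 < b) (hr : r ∈ Icc b (b + 1))
    (hs : s ∈ Icc b (b + 1)) (hβ0 : 0 < β) (hβ1 : β ≤ 1) :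
    |log r - log s| * (s * r ^ β) ≤ (b + 1) / β := by
  have hr0 : 0 < r := hb.trans_le hr.1
  have hs0 : 0 < s := hb.trans_le hs.1
  rcases le_total s r with hsr | hrs
  · have hweight : s * r ^ β ≤ s ^ β * (b + 1) := calc
      s * r ^ β = s ^ β * (r ^ β * s ^ (1 - β)) := by
        rw [mul_left_comm, ← rpow_add hs0, add_sub_cancel, rpow_one, mul_comm]
      _ ≤ s ^ β * (r ^ β * r ^ (1 - β)) := by gcongr
      _ = s ^ β * r := by rw [← rpow_add hr0, add_sub_cancel, rpow_one]
      _ ≤ s ^ β * (b + 1) := by gcongr; exact hr.2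
    rw [abs_of_nonneg (sub_nonneg.2 (log_le_log hs0 hsr))]
    calc (log r - log s) * (s * r ^ β)
        ≤ (log r - log s) * (s ^ β * (b + 1)) :=
          mul_le_mul_of_nonneg_left hweight (sub_nonneg.2 (log_le_log hs0 hsr))
      _ = (log r - log s) * s ^ β * (b + 1) := by ring
      _ ≤ 1 / β * (b + 1) := mul_le_mul_of_nonneg_right
          (log_sub_log_mul_rpow_le hs0 hsr (by linarith [hr.2, hs.1]) hβ0 hβ1) (by linarith)
      _ = (b + 1) / β := by ring
  · rw [abs_sub_comm, abs_of_nonneg (sub_nonneg.2 (log_le_log hr0 hrs))]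
    calc (log s - log r) * (s * r ^ β) = (log s - log r) * r ^ β * s := by ring
      _ ≤ 1 / β * (b + 1) := by
          gcongr
          · exact log_sub_log_mul_rpow_le hr0 hrs (by linarith [hs.2, hr.1]) hβ0 hβ1
          · exact hs.2
      _ = (b + 1) / β := by ring

theorem sq_sub_mul_mul_rpow_le {v g : ℝ → ℝ} {b r s β : ℝ} (hb : 0 < b)
    (hv_cont : ContinuousOn v (Icc b (b + 1)))
    (hg : IntervalIntegrable (fun t => g t ^ 2) volume b (b + 1))
    (hv : ∀ z ∈ Icc b (b + 1), v z = v b + ∫ t in b..z, g t)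
    (hr : r ∈ Icc b (b + 1)) (hs : s ∈ Icc b (b + 1)) (hβ0 : 0 < β) (hβ1 : β ≤ 1) :
    (v r - v s) ^ 2 * (s * r ^ β) ≤ (b + 1) / β * ∫ t in b..(b + 1), g t ^ 2 * t := by
  have hI : 0 ≤ ∫ t in b..(b + 1), g t ^ 2 * t :=
    intervalIntegral.integral_nonneg (by linarith) fun t ht => by
      have := hb.trans_le ht.1
      positivity
  have := hb.trans_le hr.1
  have := hb.trans_le hs.1
  calc (v r - v s) ^ 2 * (s * r ^ β)
      ≤ |log r - log s| * (∫ t in b..(b + 1), g t ^ 2 * t) * (s * r ^ β) := by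
        gcongr
        exact sq_sub_le_abs_log_sub_log_mul_integral hb hv_cont hg hv hs hr
    _ = |log r - log s| * (s * r ^ β) * ∫ t in b..(b + 1), g t ^ 2 * t := by ring
    _ ≤ (b + 1) / β * ∫ t in b..(b + 1), g t ^ 2 * t := by
        gcongr
        exact abs_log_sub_log_mul_mul_rpow_le hb hr hs hβ0 hβ1

theorem sq_mul_integral_le_of_integral_mul_eq_zero {v w : ℝ → ℝ} {a b c K : ℝ} (hab : a ≤ b)
    (hv : ContinuousOn v (Icc a b)) (hw : ContinuousOn w (Icc a b))
    (hw0 : ∀ s ∈ Icc a b, 0 ≤ w s) (hmean : ∫ s in a..b, v s * w s = 0)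
    (hK : ∀ s ∈ Icc a b, (c - v s) ^ 2 * w s ≤ K) :
    c ^ 2 * ∫ s in a..b, w s ≤ K * (b - a) := by
  have hvw : IntervalIntegrable (fun s => v s * w s) volume a b :=
    (hv.mul hw).intervalIntegrable_of_Icc hab
  have hv2w : IntervalIntegrable (fun s => v s ^ 2 * w s) volume a b :=
    ((hv.pow 2).mul hw).intervalIntegrable_of_Icc hab
  have hcw : IntervalIntegrable (fun s => c ^ 2 * w s) volume a b :=
    (hw.intervalIntegrable_of_Icc hab).const_mul _
  have hexpand : ∫ s in a..b, (c - v s) ^ 2 * w s =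
      c ^ 2 * (∫ s in a..b, w s) - 2 * c * (∫ s in a..b, v s * w s) +
        ∫ s in a..b, v s ^ 2 * w s := by
    rw [← intervalIntegral.integral_const_mul, ← intervalIntegral.integral_const_mul,
      ← intervalIntegral.integral_sub hcw (hvw.const_mul _),
      ← intervalIntegral.integral_add (hcw.sub (hvw.const_mul _)) hv2w]
    congr 1 with s
    ring
  have hvar : 0 ≤ ∫ s in a..b, v s ^ 2 * w s :=
    intervalIntegral.integral_nonneg hab fun s hs => mul_nonneg (sq_nonneg _) (hw0 s hs)
  calc c ^ 2 * ∫ s in a..b, w s ≤ ∫ s in a..b, (c - v s) ^ 2 * w s := by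
        rw [hexpand, hmean]
        linarith
    _ ≤ ∫ _ in a..b, K :=
        intervalIntegral.integral_mono_on hab
          ((((continuousOn_const.sub hv).pow 2).mul hw).intervalIntegrable_of_Icc hab)
          intervalIntegrable_const hK
    _ = K * (b - a) := by rw [intervalIntegral.integral_const, smul_eq_mul, mul_comm]

theorem poincare_sobolev (α : ℝ) (hα0 : 0 ≤ α) (hα1 : α < 1) :
    ∃ S : ℝ, 0 < S ∧ ∀ b : ℝ, 0 < b → ∀ v g : ℝ → ℝ,
      ContinuousOn v (Set.Icc b (b + 1)) →
      MeasureTheory.IntegrableOn (fun t => g t ^ 2) (Set.Ioo b (b + 1)) →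
      (∀ x ∈ Set.Icc b (b + 1), v x = v b + ∫ t in b..x, g t) →
      (∫ r in b..(b + 1), v r * r) = 0 →
      ∀ r ∈ Set.Icc b (b + 1),
        v r ^ 2 * r ^ (1 - α) ≤ S * ∫ r in b..(b + 1), (g r) ^ 2 * r := by
  have hβ : 0 < 1 - α := sub_pos.2 hα1
  refine ⟨2 / (1 - α), by positivity, fun b hb v g hv_cont hg hv hmean r hr => ?_⟩
  have hb1 : b ≤ b + 1 := by linarith
  have hg' : IntervalIntegrable (fun t => g t ^ 2) volume b (b + 1) :=
    (intervalIntegrable_iff_integrableOn_Ioo_of_le hb1).2 hg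
  have hr0 : 0 < r := hb.trans_le hr.1
  set I := ∫ t in b..(b + 1), g t ^ 2 * t
  have hI : 0 ≤ I := intervalIntegral.integral_nonneg hb1 fun t ht => by
    have := hb.trans_le ht.1
    positivity
  have hmean' : ∫ s in b..(b + 1), v s * (s * r ^ (1 - α)) = 0 := by
    simp_rw [← mul_assoc]
    rw [intervalIntegral.integral_mul_const, hmean, zero_mul]
  have hweighted := sq_mul_integral_le_of_integral_mul_eq_zero
    (w := fun s => s * r ^ (1 - α)) hb1 hv_cont
    (continuousOn_id.mul continuousOn_const) (fun s hs => by have := hb.trans_le hs.1; positivity)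
    hmean' fun s hs => sq_sub_mul_mul_rpow_le hb hv_cont hg' hv hr hs hβ (by linarith)
  rw [intervalIntegral.integral_mul_const, integral_id, add_sub_cancel_left, mul_one] at hweighted
  refine le_of_mul_le_mul_right (a := b + 1 / 2) ?_ (by linarith)
  calc v r ^ 2 * r ^ (1 - α) * (b + 1 / 2)
      = v r ^ 2 * (((b + 1) ^ 2 - b ^ 2) / 2 * r ^ (1 - α)) := by ring
    _ ≤ (b + 1) / (1 - α) * I := hweighted
    _ ≤ 2 / (1 - α) * I * (b + 1 / 2) := by
        rw [show 2 / (1 - α) * I * (b + 1 / 2) = (2 * b + 1) / (1 - α) * I by ring]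
        gcongr
        linarith
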